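/- arXiv:1502.03216 — 2 statements merged into one kernel-verified Lean document; each statement's English description precedes it below -/
import Mathlib

section
/- The closed part of the calculus L_lcc is convergence-admissible with respect to the set Q_lcc: for every Q ∈ Q_lcc, every closed L_lcc-expression s, and every value v, Q[s] ↓_lcc v if and only if there exists a value v' with s ↓_lcc v' and Q[v'] ↓_lcc v. -/
/-! # Core syntax for the calculi L_lcc, L_name and LR

Following Schmidt-Schauß, Sabel, Machkasova,
"Simulation in the Call-by-Need Lambda-Calculus with Letrec, Case, Constructors, and Seq".

Expressions use de Bruijn indices.  A signature fixes the set of types, the data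
constructors of each type together with their arities, and a distinguished type `Bool`
with the 0-ary constructors `True` and `False`. -/



structure Sig : Type 1 where
  TyName : Type
  CName : TyName → Type
  deceq : ∀ T, DecidableEq (CName T)
  arity : ∀ T, CName T → ℕ
  boolTy : TyName
  trueC : CName boolTy
  falseC : CName boolTy
  true_arity : arity boolTy trueC = 0
  false_arity : arity boolTy falseC = 0
  true_ne_false : trueC ≠ falseC

variable (S : Sig)

/-- ℒ-expressions (de Bruijn): variables, applications, abstractions, fully saturated
constructor applications, `seq`, `case` (with exactly one alternative per constructor
of the scrutinized type; the alternative for `c` binds `arity c` variables), and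
`letrec` with `n+1` mutually recursive bindings (so at least one binding); the
bindings and the body are under the `n+1` letrec binders.
The letrec-free expressions are the expressions of `L_lcc`. -/
inductive Exp : Type where
  | var : ℕ → Exp
  | app : Exp → Exp → Exp
  | lam : Exp → Exp
  | constr : (T : S.TyName) → (c : S.CName T) → (Fin (S.arity T c) → Exp) → Exp
  | seqE : Exp → Exp → Exp
  | caseE : (T : S.TyName) → Exp → ((c : S.CName T) → Exp) → Exp
  | letrecE : (n : ℕ) → (Fin (n+1) → Exp) → Exp → Exp

namespace Core

variable {S}

/-- lift a renaming under `m` binders -/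
def liftN (m : ℕ) (f : ℕ → ℕ) : ℕ → ℕ := fun k => if k < m then k else f (k - m) + m

/-- renaming of de Bruijn indices -/
def rename (f : ℕ → ℕ) : Exp S → Exp S
  | .var k => .var (f k)
  | .app u v => .app (rename f u) (rename f v)
  | .lam u => .lam (rename (liftN 1 f) u)
  | .constr T c args => .constr T c (fun i => rename f (args i))
  | .seqE u v => .seqE (rename f u) (rename f v)
  | .caseE T e alts => .caseE T (rename f e) (fun c => rename (liftN (S.arity T c) f) (alts c))
  | .letrecE n b t => .letrecE n (fun i => rename (liftN (n+1) f) (b i)) (rename (liftN (n+1) f) t)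

/-- lift a substitution under `m` binders -/
def upN (m : ℕ) (σ : ℕ → Exp S) : ℕ → Exp S :=
  fun k => if k < m then .var k else rename (· + m) (σ (k - m))

/-- parallel substitution -/
def subst (σ : ℕ → Exp S) : Exp S → Exp S
  | .var k => σ k
  | .app u v => .app (subst σ u) (subst σ v)
  | .lam u => .lam (subst (upN 1 σ) u)
  | .constr T c args => .constr T c (fun i => subst σ (args i))
  | .seqE u v => .seqE (subst σ u) (subst σ v)
  | .caseE T e alts => .caseE T (subst σ e) (fun c => subst (upN (S.arity T c) σ) (alts c))
  | .letrecE n b t => .letrecE n (fun i => subst (upN (n+1) σ) (b i)) (subst (upN (n+1) σ) t)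

/-- the substitution `[t/x0]` for the outermost binder -/
def consSub (t : Exp S) : ℕ → Exp S
  | 0 => t
  | (k+1) => .var k

/-- the substitution replacing the `m` innermost binders by `args` -/
def instSub {m : ℕ} (args : Fin m → Exp S) : ℕ → Exp S :=
  fun k => if h : k < m then args ⟨k, h⟩ else .var (k - m)

/-- `closedUnder d e`: all free de Bruijn indices of `e` are `< d` -/
def closedUnder : ℕ → Exp S → Prop
  | d, .var k => k < d
  | d, .app u v => closedUnder d u ∧ closedUnder d v
  | d, .lam u => closedUnder (d+1) u
  | d, .constr _ _ args => ∀ i, closedUnder d (args i)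
  | d, .seqE u v => closedUnder d u ∧ closedUnder d v
  | d, .caseE T e alts => closedUnder d e ∧ ∀ c, closedUnder (d + S.arity T c) (alts c)
  | d, .letrecE n b t => (∀ i, closedUnder (d + (n+1)) (b i)) ∧ closedUnder (d + (n+1)) t

/-- a closed expression -/
def closed (e : Exp S) : Prop := closedUnder 0 e

/-- letrec-free expressions, i.e. the expressions of the calculus `L_lcc` -/
def lfree : Exp S → Prop
  | .var _ => True
  | .app u v => lfree u ∧ lfree v
  | .lam u => lfree u
  | .constr _ _ args => ∀ i, lfree (args i)
  | .seqE u v => lfree u ∧ lfree v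
  | .caseE _ e alts => lfree e ∧ ∀ c, lfree (alts c)
  | .letrecE _ _ _ => False

/-- values: abstractions and constructor applications -/
def isValue : Exp S → Prop
  | .lam _ => True
  | .constr _ _ _ => True
  | _ => False

/-- constructor applications -/
def isConstrApp (e : Exp S) : Prop := ∃ T c args, e = .constr T c args

/-- the diverging expression `Ω = (λz. z z) (λx. x x)` -/
def Omega : Exp S :=
  .app (.lam (.app (.var 0) (.var 0))) (.lam (.app (.var 0) (.var 0)))

/-- the constructor `True` (of the distinguished type `Bool`, arity 0) -/
def trueE : Exp S := .constr S.boolTy S.trueC (fun _ => .var 0)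

/-- update the alternative for constructor `c0` -/
def updAlt {T : S.TyName} (alts : (c : S.CName T) → Exp S) (c0 : S.CName T) (e : Exp S) :
    (c : S.CName T) → Exp S :=
  fun c => letI := S.deceq T; if c = c0 then e else alts c

end Core
namespace Core

variable {S : Sig}

/-! ## Contexts -/

/-- reduction contexts of `L_lcc` (and `A`-contexts of `L_name`):
`A ::= [·] | (A s) | (case_T A of alts) | (seq A s)` -/
inductive ACtx (S : Sig) : Type where
  | hole : ACtx S
  | appA : ACtx S → Exp S → ACtx S
  | seqA : ACtx S → Exp S → ACtx S
  | caseA : (T : S.TyName) → ACtx S → ((c : S.CName T) → Exp S) → ACtx S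

/-- plugging an expression into an `A`-context -/
def plugA : ACtx S → Exp S → Exp S
  | .hole, e => e
  | .appA A t, e => .app (plugA A e) t
  | .seqA A t, e => .seqE (plugA A e) t
  | .caseA T A alts, e => .caseE T (plugA A e) alts

/-- renaming an `A`-context (there are no binders above the hole) -/
def renameA (f : ℕ → ℕ) : ACtx S → ACtx S
  | .hole => .hole
  | .appA A t => .appA (renameA f A) (rename f t)
  | .seqA A t => .seqA (renameA f A) (rename f t)
  | .caseA T A alts => .caseA T (renameA f A) (fun c => rename (liftN (S.arity T c) f) (alts c))

/-- general (one-hole, possibly capturing) contexts over ℒ-expressions -/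
inductive Ctx (S : Sig) : Type where
  | hole : Ctx S
  | appL : Ctx S → Exp S → Ctx S
  | appR : Exp S → Ctx S → Ctx S
  | lamC : Ctx S → Ctx S
  | seqL : Ctx S → Exp S → Ctx S
  | seqR : Exp S → Ctx S → Ctx S
  | constrC : (T : S.TyName) → (c : S.CName T) → Fin (S.arity T c) →
      (Fin (S.arity T c) → Exp S) → Ctx S → Ctx S
  | caseScrut : (T : S.TyName) → Ctx S → ((c : S.CName T) → Exp S) → Ctx S
  | caseAlt : (T : S.TyName) → (c0 : S.CName T) → Exp S → ((c : S.CName T) → Exp S) →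
      Ctx S → Ctx S
  | letrecB : (n : ℕ) → Fin (n+1) → (Fin (n+1) → Exp S) → Ctx S → Exp S → Ctx S
  | letrecT : (n : ℕ) → (Fin (n+1) → Exp S) → Ctx S → Ctx S

/-- plugging (capture-permitting) into a general context -/
def plugC : Ctx S → Exp S → Exp S
  | .hole, e => e
  | .appL C t, e => .app (plugC C e) t
  | .appR t C, e => .app t (plugC C e)
  | .lamC C, e => .lam (plugC C e)
  | .seqL C t, e => .seqE (plugC C e) t
  | .seqR t C, e => .seqE t (plugC C e)
  | .constrC T c i args C, e => .constr T c (Function.update args i (plugC C e))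
  | .caseScrut T C alts, e => .caseE T (plugC C e) alts
  | .caseAlt T c0 scrut alts C, e => .caseE T scrut (updAlt alts c0 (plugC C e))
  | .letrecB n i b C t, e => .letrecE n (Function.update b i (plugC C e)) t
  | .letrecT n b C, e => .letrecE n b (plugC C e)

/-- number of binders above the hole of a context -/
def depthC : Ctx S → ℕ
  | .hole => 0
  | .appL C _ => depthC C
  | .appR _ C => depthC C
  | .lamC C => depthC C + 1
  | .seqL C _ => depthC C
  | .seqR _ C => depthC C
  | .constrC _ _ _ _ C => depthC C
  | .caseScrut _ C _ => depthC C
  | .caseAlt T c0 _ _ C => depthC C + S.arity T c0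
  | .letrecB n _ _ C _ => depthC C + (n+1)
  | .letrecT n _ C => depthC C + (n+1)

/-- letrec-free contexts, i.e. the contexts of `L_lcc` -/
def lfreeCtx : Ctx S → Prop
  | .hole => True
  | .appL C t => lfreeCtx C ∧ lfree t
  | .appR t C => lfree t ∧ lfreeCtx C
  | .lamC C => lfreeCtx C
  | .seqL C t => lfreeCtx C ∧ lfree t
  | .seqR t C => lfree t ∧ lfreeCtx C
  | .constrC _ _ _ args C => (∀ i, lfree (args i)) ∧ lfreeCtx C
  | .caseScrut _ C alts => lfreeCtx C ∧ ∀ c, lfree (alts c)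
  | .caseAlt _ _ scrut alts C => lfree scrut ∧ (∀ c, lfree (alts c)) ∧ lfreeCtx C
  | .letrecB _ _ _ _ _ => False
  | .letrecT _ _ _ => False

/-! ## The calculus `L_lcc` -/

/-- the basic reduction rules (nbeta), (nseq), (ncase) of `L_lcc` -/
inductive LccBase : Exp S → Exp S → Prop where
  | nbeta {u t} : LccBase (.app (.lam u) t) (subst (consSub t) u)
  | nseq {v t} : isValue v → LccBase (.seqE v t) t
  | ncase {T c args alts} :
      LccBase (.caseE T (.constr T c args) alts) (subst (instSub args) (alts c))

/-- normal-order reduction of `L_lcc`: a basic rule inside a reduction context -/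
def lccStep (s t : Exp S) : Prop :=
  ∃ (A : ACtx S) (r r' : Exp S), LccBase r r' ∧ s = plugA A r ∧ t = plugA A r'

/-- `s` reduces in finitely many normal-order steps to the value `v` -/
def lccConvTo (s v : Exp S) : Prop := Relation.ReflTransGen lccStep s v ∧ isValue v

/-- convergence in `L_lcc` -/
def lccConv (s : Exp S) : Prop := ∃ v, lccConvTo s v

/-- contextual preorder of `L_lcc` (quantifying over the letrec-free contexts) -/
def leLcc (s t : Exp S) : Prop :=
  ∀ C : Ctx S, lfreeCtx C → lccConv (plugC C s) → lccConv (plugC C t)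

/-- contextual equivalence of `L_lcc` -/
def eqLcc (s t : Exp S) : Prop := leLcc s t ∧ leLcc t s

/-- open extension of a relation, w.r.t. closing `L_lcc`-substitutions -/
def openL (η : Exp S → Exp S → Prop) (s t : Exp S) : Prop :=
  ∀ σ : ℕ → Exp S, (∀ k, lfree (σ k)) →
    closed (subst σ s) → closed (subst σ t) → η (subst σ s) (subst σ t)

/-- `cBot`: expressions all of whose closing `L_lcc`-instances diverge -/
def cBot (s : Exp S) : Prop :=
  ∀ σ : ℕ → Exp S, (∀ k, lfree (σ k)) → closed (subst σ s) → ¬ lccConv (subst σ s)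

/-- greatest fixpoint of a (monotone) operator on relations:
the union of all post-fixed points -/
def gfpRel {α : Type*} (F : (α → α → Prop) → (α → α → Prop)) (a b : α) : Prop :=
  ∃ η, (∀ x y, η x y → F η x y) ∧ η a b

/-- the operator `F_lcc` for applicative similarity in `L_lcc` -/
def Flcc (η : Exp S → Exp S → Prop) (s t : Exp S) : Prop :=
  (∀ s', lccConvTo s (.lam s') →
      ((∃ t', lccConvTo t (.lam t') ∧ openL η s' t') ∨
       (∃ T c targs, lccConvTo t (.constr T c targs) ∧ cBot s'))) ∧
  (∀ T c args, lccConvTo s (.constr T c args) →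
      ∃ targs, lccConvTo t (.constr T c targs) ∧ ∀ i, η (args i) (targs i))

/-- applicative similarity `≼_lcc` in `L_lcc` -/
def simLcc : Exp S → Exp S → Prop := gfpRel Flcc

end Core
namespace Core

variable {S : Sig}

/-! ## The test contexts `Q_lcc` and `Q_CE` -/

/-- the context `case_T [·] of … ((c x1 … x_ar) → x_i) …`, all other alternatives `Ω` -/
def caseSelCtx (T : S.TyName) (c : S.CName T) (i : Fin (S.arity T c)) : Exp S → Exp S :=
  fun e => .caseE T e (fun c' => letI := S.deceq T; if c' = c then .var i else Omega)

/-- the context `case_T [·] of … ((c x1 … x_ar) → True) …`, all other alternatives `Ω` -/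
def caseTrueCtx (T : S.TyName) (c : S.CName T) : Exp S → Exp S :=
  fun e => .caseE T e (fun c' => letI := S.deceq T; if c' = c then trueE else Omega)

/-- the set `Q_lcc`: application to a closed `L_lcc`-expression, the selector case
contexts, and the `True` case contexts -/
def Qlcc (S : Sig) : Set (Exp S → Exp S) :=
  {f | (∃ r : Exp S, lfree r ∧ closed r ∧ f = fun e => .app e r) ∨
       (∃ T c i, f = caseSelCtx T c i) ∨
       (∃ T c, f = caseTrueCtx T c)}

/-- the set `CE_lcc` of closed letrec-free expressions generated by
`r ::= Ω | λx.s | (c r1 … r_ar)` -/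
inductive CE : Exp S → Prop where
  | omega : CE Omega
  | abs {u : Exp S} : lfree (Exp.lam u) → closed (Exp.lam u) → CE (.lam u)
  | constrI {T c} {args : Fin (S.arity T c) → Exp S} :
      (∀ i, CE (args i)) → CE (.constr T c args)

/-- the set `Q_CE`: like `Q_lcc`, but the arguments in application contexts are
restricted to `CE_lcc` -/
def QCE (S : Sig) : Set (Exp S → Exp S) :=
  {f | (∃ r : Exp S, CE r ∧ f = fun e => .app e r) ∨
       (∃ T c i, f = caseSelCtx T c i) ∨
       (∃ T c, f = caseTrueCtx T c)}

/-- `Q1 (Q2 (… (Qn s)))` -/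
def applyAll (l : List (Exp S → Exp S)) (s : Exp S) : Exp S := l.foldr (fun f e => f e) s

/-! ### `Q`-similarity and the inductive `Q`-preorder in `L_lcc` -/

/-- the `Q`-experiment operator for `L_lcc`, instantiated with a set `𝒬` of contexts -/
def FQlcc (𝒬 : Set (Exp S → Exp S)) (η : Exp S → Exp S → Prop) (s t : Exp S) : Prop :=
  ∀ v1, lccConvTo s v1 → ∃ v2, lccConvTo t v2 ∧ ∀ f ∈ 𝒬, η (f v1) (f v2)

/-- `𝒬`-similarity in `L_lcc` -/
def simQlcc (𝒬 : Set (Exp S → Exp S)) : Exp S → Exp S → Prop := gfpRel (FQlcc 𝒬)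

/-- the inductively defined preorder `≤_{lcc,𝒬}` -/
def leQlcc (𝒬 : Set (Exp S → Exp S)) (s t : Exp S) : Prop :=
  ∀ l : List (Exp S → Exp S), (∀ f ∈ l, f ∈ 𝒬) →
    lccConv (applyAll l s) → lccConv (applyAll l t)

end Core
namespace Core

variable {S : Sig}

/-! ## The call-by-need calculus `LR` -/

/-- variable-to-variable binding chains in a letrec environment -/
inductive derefChain {n : ℕ} (b : Fin (n+1) → Exp S) : Fin (n+1) → Fin (n+1) → Prop where
  | refl (i) : derefChain b i i
  | step {i j k : Fin (n+1)} : b i = .var (j : ℕ) → derefChain b j k → derefChain b i k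

/-- `Needed b body i`: binding `i` is visited by the labeling algorithm (its value is
needed), starting from the body of the top-level letrec -/
inductive Needed {n : ℕ} (b : Fin (n+1) → Exp S) (body : Exp S) : Fin (n+1) → Prop where
  | ofBody {A : ACtx S} {i : Fin (n+1)} : body = plugA A (.var (i : ℕ)) → Needed b body i
  | ofBind {k} {A : ACtx S} {i : Fin (n+1)} :
      Needed b body k → b k = plugA A (.var (i : ℕ)) → Needed b body i

/-- renaming used when merging letrec environments: the outer part
(`N` outer bindings, `M` inner bindings) -/
def rhoOut (N M : ℕ) : ℕ → ℕ := fun k => if k < N then k else k + M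

/-- renaming used when merging letrec environments: the inner part -/
def rhoIn (N M : ℕ) : ℕ → ℕ :=
  fun k => if k < M then k + N else if k < M + N then k - M else k

/-- merged environment of `(llet-in)`: outer bindings first, then inner bindings -/
def mergeEnv {n m : ℕ} (b : Fin (n+1) → Exp S) (b2 : Fin (m+1) → Exp S) :
    Fin (n+m+1+1) → Exp S :=
  fun j => if h : (j : ℕ) < n+1
    then rename (rhoOut (n+1) (m+1)) (b ⟨j, h⟩)
    else rename (rhoIn (n+1) (m+1)) (b2 ⟨(j : ℕ) - (n+1), by omega⟩)

/-- merged environment of `(llet-e)`: the environment of the letrec bound at `i`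
is flattened into the outer environment, the binding `i` becomes the inner body -/
def mergeEnvAt {n m : ℕ} (b : Fin (n+1) → Exp S) (i : Fin (n+1))
    (b2 : Fin (m+1) → Exp S) (t2 : Exp S) : Fin (n+m+1+1) → Exp S :=
  fun j => if h : (j : ℕ) < n+1
    then (if (⟨j, h⟩ : Fin (n+1)) = i
          then rename (rhoIn (n+1) (m+1)) t2
          else rename (rhoOut (n+1) (m+1)) (b ⟨j, h⟩))
    else rename (rhoIn (n+1) (m+1)) (b2 ⟨(j : ℕ) - (n+1), by omega⟩)

/-- the environment produced by `(case-in)`/`(case-e)` with `arity c = m+1`: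
all old bindings are shifted, binding `j` becomes `c y1 … y_{m+1}` for the fresh
bindings `y_q = s_q` appended at the end -/
def caseShareEnv {n m : ℕ} (b : Fin (n+1) → Exp S) (j : Fin (n+1))
    {T : S.TyName} (c : S.CName T) (h : S.arity T c = m+1)
    (args : Fin (S.arity T c) → Exp S) : Fin (n+m+1+1) → Exp S :=
  fun p => if hp : (p : ℕ) < n+1
    then (if (⟨p, hp⟩ : Fin (n+1)) = j
          then .constr T c (fun q => .var (n+1+(q : ℕ)))
          else rename (rhoOut (n+1) (m+1)) (b ⟨p, hp⟩))
    else rename (rhoOut (n+1) (m+1)) (args (Fin.cast h.symm ⟨(p : ℕ) - (n+1), by omega⟩))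

/-- the replacement for a `(case-in)`/`(case-e)` redex: `letrec z1 = y1, …, z_{m+1} = y_{m+1}
in alt`, where the `y_q` are the fresh environment bindings (indices `n+1+q` at top level) -/
def caseShareBody {n m : ℕ} {T : S.TyName} (c : S.CName T) (_h : S.arity T c = m+1)
    (alts : (c : S.CName T) → Exp S) : Exp S :=
  .letrecE m (fun q => .var (n+1+(m+1)+(q : ℕ)))
    (rename (liftN (m+1) (rhoOut (n+1) (m+1))) (alts c))

/-- the basic `LR`-rules not involving the top-level environment:
(lbeta), (seq-c), (case-c), (lapp), (lseq), (lcase) -/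
inductive LRbase : Exp S → Exp S → Prop where
  | lbeta {u t} :
      LRbase (.app (.lam u) t) (.letrecE 0 (fun _ => rename (· + 1) t) u)
  | seqc {v t} : isValue v → LRbase (.seqE v t) t
  | casec0 {T c args alts} (h : S.arity T c = 0) :
      LRbase (.caseE T (.constr T c args) alts) (alts c)
  | casec1 {T c args alts m} (h : S.arity T c = m+1) :
      LRbase (.caseE T (.constr T c args) alts)
        (.letrecE m (fun i => rename (· + (m+1)) (args (Fin.cast h.symm i))) (alts c))
  | lapp {n b e t} :
      LRbase (.app (.letrecE n b e) t) (.letrecE n b (.app e (rename (· + (n+1)) t)))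
  | lseq {n b e t} :
      LRbase (.seqE (.letrecE n b e) t) (.letrecE n b (.seqE e (rename (· + (n+1)) t)))
  | lcase {n b e T alts} :
      LRbase (.caseE T (.letrecE n b e) alts)
        (.letrecE n b (.caseE T e (fun c => rename (liftN (S.arity T c) (· + (n+1))) (alts c))))

/-- normal-order reduction `→_LR` of the call-by-need calculus `LR`:
the rules of Fig. 1, applied at the position determined by the labeling algorithm
(in the body or in a needed binding of the top-level letrec, or — for expressions
without a top-level letrec — along the application/seq/case spine). -/
inductive LRstep : Exp S → Exp S → Prop where
  /- basic rule at the top (no top-level letrec environment involved): -/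
  | topA {A : ACtx S} {r r'} : LRbase r r' → LRstep (plugA A r) (plugA A r')
  /- basic rule in the body of the top-level letrec: -/
  | bodyA {n} {b : Fin (n+1) → Exp S} {A : ACtx S} {r r'} :
      LRbase r r' → LRstep (.letrecE n b (plugA A r)) (.letrecE n b (plugA A r'))
  /- basic rule inside a needed binding: -/
  | bindA {n} {b : Fin (n+1) → Exp S} {body} {i : Fin (n+1)} {A : ACtx S} {r r'} :
      Needed b body i → b i = plugA A r → LRbase r r' →
      LRstep (.letrecE n b body) (.letrecE n (Function.update b i (plugA A r')) body)
  /- (llet-in): -/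
  | lletIn {n b m b2 t2} :
      LRstep (.letrecE n b (.letrecE m b2 t2))
        (.letrecE (n+m+1) (mergeEnv b b2) (rename (rhoIn (n+1) (m+1)) t2))
  /- (llet-e): -/
  | lletE {n b body} {i : Fin (n+1)} {m b2 t2} :
      Needed b body i → b i = .letrecE m b2 t2 →
      LRstep (.letrecE n b body)
        (.letrecE (n+m+1) (mergeEnvAt b i b2 t2) (rename (rhoOut (n+1) (m+1)) body))
  /- (cp-in): -/
  | cpIn {n} {b : Fin (n+1) → Exp S} {A : ACtx S} {i j : Fin (n+1)} {u} :
      derefChain b i j → b j = .lam u →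
      LRstep (.letrecE n b (plugA A (.var (i : ℕ)))) (.letrecE n b (plugA A (.lam u)))
  /- (cp-e): -/
  | cpE {n} {b : Fin (n+1) → Exp S} {body} {k : Fin (n+1)} {A : ACtx S} {i j : Fin (n+1)} {u} :
      Needed b body k → b k = plugA A (.var (i : ℕ)) → derefChain b i j → b j = .lam u →
      LRstep (.letrecE n b body) (.letrecE n (Function.update b k (plugA A (.lam u))) body)
  /- (seq-in): -/
  | seqIn {n} {b : Fin (n+1) → Exp S} {A : ACtx S} {i j : Fin (n+1)} {t} :
      derefChain b i j → isConstrApp (b j) →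
      LRstep (.letrecE n b (plugA A (.seqE (.var (i : ℕ)) t)))
        (.letrecE n b (plugA A t))
  /- (seq-e): -/
  | seqEe {n} {b : Fin (n+1) → Exp S} {body} {k : Fin (n+1)} {A : ACtx S} {i j : Fin (n+1)} {t} :
      Needed b body k → b k = plugA A (.seqE (.var (i : ℕ)) t) →
      derefChain b i j → isConstrApp (b j) →
      LRstep (.letrecE n b body) (.letrecE n (Function.update b k (plugA A t)) body)
  /- (case-in), scrutinized constructor of arity 0: -/
  | caseIn0 {n} {b : Fin (n+1) → Exp S} {A : ACtx S} {i j : Fin (n+1)} {T c args alts} :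
      derefChain b i j → b j = .constr T c args → S.arity T c = 0 →
      LRstep (.letrecE n b (plugA A (.caseE T (.var (i : ℕ)) alts)))
        (.letrecE n b (plugA A (alts c)))
  /- (case-e), scrutinized constructor of arity 0: -/
  | caseE0 {n} {b : Fin (n+1) → Exp S} {body} {k : Fin (n+1)} {A : ACtx S} {i j : Fin (n+1)}
      {T c args alts} :
      Needed b body k → b k = plugA A (.caseE T (.var (i : ℕ)) alts) →
      derefChain b i j → b j = .constr T c args → S.arity T c = 0 →
      LRstep (.letrecE n b body) (.letrecE n (Function.update b k (plugA A (alts c))) body)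
  /- (case-in), arity ≥ 1: the constructor arguments are shared in fresh bindings -/
  | caseIn1 {n} {b : Fin (n+1) → Exp S} {A : ACtx S} {i j : Fin (n+1)} {T c args alts m}
      (h : S.arity T c = m+1) :
      derefChain b i j → b j = .constr T c args →
      LRstep (.letrecE n b (plugA A (.caseE T (.var (i : ℕ)) alts)))
        (.letrecE (n+m+1) (caseShareEnv b j c h args)
          (plugA (renameA (rhoOut (n+1) (m+1)) A) (caseShareBody (n := n) c h alts)))
  /- (case-e), arity ≥ 1: -/
  | caseE1 {n} {b : Fin (n+1) → Exp S} {body} {k : Fin (n+1)} {A : ACtx S} {i j : Fin (n+1)}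
      {T c args alts m} (h : S.arity T c = m+1) :
      Needed b body k → b k = plugA A (.caseE T (.var (i : ℕ)) alts) →
      derefChain b i j → b j = .constr T c args →
      LRstep (.letrecE n b body)
        (.letrecE (n+m+1)
          (Function.update (caseShareEnv b j c h args)
            (Fin.castLE (by omega) k)
            (plugA (renameA (rhoOut (n+1) (m+1)) A) (caseShareBody (n := n) c h alts)))
          (rename (rhoOut (n+1) (m+1)) body))

/-- weak head normal forms of `LR`: values, `letrec Env in v` for a value `v`, and
`letrec x1 = (c s⃗), x2 = x1, …, xm = x_{m-1}, Env in xm` -/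
def isLRwhnf (s : Exp S) : Prop :=
  isValue s ∨
  ∃ (n : ℕ) (b : Fin (n+1) → Exp S) (body : Exp S), s = .letrecE n b body ∧
    (isValue body ∨ ∃ i j : Fin (n+1), body = .var (i : ℕ) ∧ derefChain b i j ∧ isConstrApp (b j))

/-- `s` reduces in finitely many `→_LR`-steps to an `LR`-WHNF `v` -/
def lrConvTo (s v : Exp S) : Prop := Relation.ReflTransGen LRstep s v ∧ isLRwhnf v

/-- convergence in `LR` -/
def lrConv (s : Exp S) : Prop := ∃ v, lrConvTo s v

/-- contextual preorder of `LR` -/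
def leLR (s t : Exp S) : Prop := ∀ C : Ctx S, lrConv (plugC C s) → lrConv (plugC C t)

/-- contextual equivalence of `LR` -/
def eqLR (s t : Exp S) : Prop := leLR s t ∧ leLR t s

end Core
namespace Core

variable {S : Sig}

/-! ## The call-by-name calculus `L_name` -/

/-- a letrec frame (one `letrec` environment) -/
def Frame (S : Sig) : Type := Σ n : ℕ, Fin (n+1) → Exp S

/-- plugging under a stack of letrec frames (`L`-contexts), outermost frame first -/
def plugFrames : List (Frame S) → Exp S → Exp S
  | [], e => e
  | ⟨n, b⟩ :: fs, e => .letrecE n b (plugFrames fs e)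

/-- looking up a de Bruijn index in a stack of letrec frames given innermost-first;
the result is weakened to the innermost level -/
def lookRev : List (Frame S) → ℕ → Option (Exp S)
  | [], _ => none
  | ⟨n, b⟩ :: rest, k =>
      if h : k < n+1 then some (b ⟨k, h⟩)
      else (lookRev rest (k - (n+1))).map (rename (· + (n+1)))

/-- the basic rules of `L_name`: (beta), (seq), (case) — with substitution —
and (lapp), (lseq), (lcase) -/
inductive NBase : Exp S → Exp S → Prop where
  | beta {u t} : NBase (.app (.lam u) t) (subst (consSub t) u)
  | seqv {v t} : isValue v → NBase (.seqE v t) t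
  | casec {T c args alts} :
      NBase (.caseE T (.constr T c args) alts) (subst (instSub args) (alts c))
  | lapp {n b e t} :
      NBase (.app (.letrecE n b e) t) (.letrecE n b (.app e (rename (· + (n+1)) t)))
  | lseq {n b e t} :
      NBase (.seqE (.letrecE n b e) t) (.letrecE n b (.seqE e (rename (· + (n+1)) t)))
  | lcase {n b e T alts} :
      NBase (.caseE T (.letrecE n b e) alts)
        (.letrecE n b (.caseE T e (fun c => rename (liftN (S.arity T c) (· + (n+1))) (alts c))))

/-- normal-order reduction `→_name` of `L_name`: a basic rule, or the copy rule (gcp),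
inside a reduction context `L[A]` -/
inductive NStep : Exp S → Exp S → Prop where
  | base {fs : List (Frame S)} {A : ACtx S} {r r'} :
      NBase r r' → NStep (plugFrames fs (plugA A r)) (plugFrames fs (plugA A r'))
  | gcp {fs : List (Frame S)} {A : ACtx S} {k : ℕ} {e : Exp S} :
      lookRev fs.reverse k = some e →
      NStep (plugFrames fs (plugA A (.var k))) (plugFrames fs (plugA A e))

/-- weak head normal forms of `L_name`: `L[v]` for a value `v` -/
def isNameWhnf (s : Exp S) : Prop :=
  ∃ (fs : List (Frame S)) (v : Exp S), s = plugFrames fs v ∧ isValue v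

/-- `s` reduces in finitely many `→_name`-steps to an `L_name`-WHNF `v` -/
def nameConvTo (s v : Exp S) : Prop := Relation.ReflTransGen NStep s v ∧ isNameWhnf v

/-- convergence in `L_name` -/
def nameConv (s : Exp S) : Prop := ∃ v, nameConvTo s v

/-- contextual preorder of `L_name` -/
def leName (s t : Exp S) : Prop := ∀ C : Ctx S, nameConv (plugC C s) → nameConv (plugC C t)

/-- contextual equivalence of `L_name` -/
def eqName (s t : Exp S) : Prop := leName s t ∧ leName t s

/-! ## The translation `N : L_name → L_lcc` via multi-fixpoint combinators -/

/-- iterated application `f a1 … an` -/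
def apps (f : Exp S) (l : List (Exp S)) : Exp S := l.foldl .app f

/-- iterated abstraction `λ^k. e` -/
def lamN : ℕ → Exp S → Exp S
  | 0, e => e
  | (k+1), e => .lam (lamN k e)

/-- shift all indices `≥ c` by `k` -/
def shiftCut (c k : ℕ) : Exp S → Exp S := rename (fun x => if x < c then x else x + k)

/-- the argument list `[g (N-1), …, g 0]`, so that after `N` beta steps the
binder with de Bruijn index `i` receives `g i` -/
def argsOf {N : ℕ} (g : Fin N → Exp S) : List (Exp S) := (List.ofFn g).reverse

/-- `U_i = (x_i' x_1' … x_n')` (under the outer binders) -/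
def Uarg (N : ℕ) (i : Fin N) : Exp S :=
  apps (.var (i : ℕ)) (argsOf (fun j : Fin N => .var (j : ℕ)))

/-- `X_i' = λ x1 … xn. F_i (x1 x1 … xn) … (xn x1 … xn)` with `F_i = λ x1 … xn. gi` -/
def Xarg (N : ℕ) (gi : Exp S) : Exp S :=
  lamN N (apps (lamN N (shiftCut N N gi))
    (argsOf (fun j : Fin N => apps (.var (j : ℕ)) (argsOf (fun l : Fin N => .var (l : ℕ))))))

/-- the translation of one letrec: `(λ x1' … xn'. (λ x1 … xn. t') U1 … Un) X1' … Xn'` -/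
def letrecTrans (N : ℕ) (g : Fin N → Exp S) (t' : Exp S) : Exp S :=
  apps (lamN N (apps (lamN N (shiftCut N N t')) (argsOf (Uarg N))))
    (argsOf (fun i => Xarg N (g i)))

/-- the translation `N : L_name → L_lcc`, eliminating letrec by multi-fixpoint
combinators; it is homomorphic on all other constructs.
(The translation `W : LR → L_name` is the identity.) -/
def Ntr : Exp S → Exp S
  | .var k => .var k
  | .app u v => .app (Ntr u) (Ntr v)
  | .lam u => .lam (Ntr u)
  | .constr T c args => .constr T c (fun i => Ntr (args i))
  | .seqE u v => .seqE (Ntr u) (Ntr v)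
  | .caseE T e alts => .caseE T (Ntr e) (fun c => Ntr (alts c))
  | .letrecE n b t => letrecTrans (n+1) (fun i => Ntr (b i)) (Ntr t)

end Core
namespace Core

variable {S : Sig}

/-! ## `Q`-similarity in `LR` -/

/-- open extension of a relation w.r.t. closing ℒ-substitutions -/
def openAll (η : Exp S → Exp S → Prop) (s t : Exp S) : Prop :=
  ∀ σ : ℕ → Exp S, closed (subst σ s) → closed (subst σ t) → η (subst σ s) (subst σ t)

/-- the `Q`-experiment operator for `LR`, instantiated with a set `𝒬` of contexts -/
def FQLR (𝒬 : Set (Exp S → Exp S)) (η : Exp S → Exp S → Prop) (s t : Exp S) : Prop :=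
  ∀ v1, lrConvTo s v1 → ∃ v2, lrConvTo t v2 ∧ ∀ f ∈ 𝒬, η (f v1) (f v2)

/-- `𝒬`-similarity in `LR` -/
def simQLR (𝒬 : Set (Exp S → Exp S)) : Exp S → Exp S → Prop := gfpRel (FQLR 𝒬)

/-- the inductively defined preorder `≤_{LR,𝒬}` -/
def leQLR (𝒬 : Set (Exp S → Exp S)) (s t : Exp S) : Prop :=
  ∀ l : List (Exp S → Exp S), (∀ f ∈ l, f ∈ 𝒬) →
    lrConv (applyAll l s) → lrConv (applyAll l t)

end Core

namespace Core

/-! A context of `Q_lcc` is a reduction context `R` of depth one.  Normal-order reduction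
of `R[s]` can only contract a redex inside `s` as long as `s` is not a value, since a
redex whose reduction context reaches into `R` would have `s` as its value part.  Hence
every reduction `R[s] →* v` to a value factors as `R[s] →* R[v'] →* v` with `s →* v'`,
and conversely reductions of `s` lift to `R[s]`. -/

variable {S : Sig}

def compA : ACtx S → ACtx S → ACtx S
  | .hole, B => B
  | .appA A t, B => .appA (compA A B) t
  | .seqA A t, B => .seqA (compA A B) t
  | .caseA T A alts, B => .caseA T (compA A B) alts

theorem plugA_compA (A B : ACtx S) (e : Exp S) :
    plugA (compA A B) e = plugA A (plugA B e) := by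
  induction A with
  | hole => rfl
  | appA A t ih | seqA A t ih | caseA T A alts ih => simp only [compA, plugA, ih]

theorem isValue_of_isValue_plugA {A : ACtx S} {e : Exp S} (h : isValue (plugA A e)) :
    isValue e := by
  cases A <;> first | exact h | cases h

theorem LccBase.eq_hole_or_isValue {r r' : Exp S} (hr : LccBase r r') {A : ACtx S}
    {e : Exp S} (he : plugA A e = r) : A = .hole ∨ isValue e := by
  cases A with
  | hole => exact .inl rfl
  | appA A t | seqA A t | caseA T A alts =>
    refine .inr (isValue_of_isValue_plugA (A := A) ?_)
    cases hr <;> simp_all [plugA, isValue]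

theorem exists_compA_of_plugA_eq_redex {r r' : Exp S} (hr : LccBase r r') :
    ∀ {A B : ACtx S} {s : Exp S}, ¬ isValue s → plugA A s = plugA B r →
      ∃ B', B = compA A B' ∧ s = plugA B' r := by
  intro A
  induction A with
  | hole => exact fun _ h => ⟨_, rfl, h⟩
  | appA A t ih =>
    intro B s hs h
    cases B with
    | hole => exact absurd ((hr.eq_hole_or_isValue h).resolve_left nofun) hs
    | appA B u =>
      obtain ⟨hA, rfl⟩ := Exp.app.inj h
      obtain ⟨B', rfl, rfl⟩ := ih hs hA
      exact ⟨B', rfl, rfl⟩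
    | seqA | caseA => cases h
  | seqA A t ih =>
    intro B s hs h
    cases B with
    | hole => exact absurd ((hr.eq_hole_or_isValue h).resolve_left nofun) hs
    | seqA B u =>
      obtain ⟨hA, rfl⟩ := Exp.seqE.inj h
      obtain ⟨B', rfl, rfl⟩ := ih hs hA
      exact ⟨B', rfl, rfl⟩
    | appA | caseA => cases h
  | caseA T A alts ih =>
    intro B s hs h
    cases B with
    | hole => exact absurd ((hr.eq_hole_or_isValue h).resolve_left nofun) hs
    | caseA T' B u =>
      obtain ⟨rfl, hA, hu⟩ := Exp.caseE.inj h
      obtain ⟨B', rfl, rfl⟩ := ih hs hA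
      exact ⟨B', by rw [eq_of_heq hu]; rfl, rfl⟩
    | appA | seqA => cases h

theorem lccStep.plugA (A : ACtx S) {s t : Exp S} (h : lccStep s t) :
    lccStep (plugA A s) (plugA A t) := by
  obtain ⟨B, r, r', hr, rfl, rfl⟩ := h
  exact ⟨compA A B, r, r', hr, (plugA_compA A B r).symm, (plugA_compA A B r').symm⟩

theorem exists_lccStep_of_lccStep_plugA {A : ACtx S} {s t : Exp S} (hs : ¬ isValue s)
    (h : lccStep (plugA A s) t) : ∃ s', lccStep s s' ∧ t = plugA A s' := by
  obtain ⟨B, r, r', hr, hB, rfl⟩ := h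
  obtain ⟨B', rfl, rfl⟩ := exists_compA_of_plugA_eq_redex hr hs hB
  exact ⟨plugA B' r', ⟨B', r, r', hr, rfl, rfl⟩, plugA_compA A B' r'⟩

theorem exists_lccConvTo_of_lccConvTo_plugA {A : ACtx S} {s v : Exp S}
    (h : lccConvTo (plugA A s) v) : ∃ v', lccConvTo s v' ∧ lccConvTo (plugA A v') v := by
  obtain ⟨hred, hv⟩ := h
  generalize hx : plugA A s = x at hred
  induction hred using Relation.ReflTransGen.head_induction_on generalizing s with
  | refl =>
    subst hx
    exact ⟨s, ⟨.refl, isValue_of_isValue_plugA hv⟩, .refl, hv⟩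
  | head hstep hrest ih =>
    subst hx
    by_cases hs : isValue s
    · exact ⟨s, ⟨.refl, hs⟩, .head hstep hrest, hv⟩
    · obtain ⟨s', hss', rfl⟩ := exists_lccStep_of_lccStep_plugA hs hstep
      obtain ⟨v', ⟨hsv', hv'⟩, hconv⟩ := ih rfl
      exact ⟨v', ⟨.head hss' hsv', hv'⟩, hconv⟩

theorem lccConvTo_plugA_iff (A : ACtx S) (s v : Exp S) :
    lccConvTo (plugA A s) v ↔ ∃ v', lccConvTo s v' ∧ lccConvTo (plugA A v') v := by
  refine ⟨exists_lccConvTo_of_lccConvTo_plugA, ?_⟩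
  rintro ⟨v', ⟨hsv', -⟩, hred, hv⟩
  exact ⟨.trans (hsv'.lift (plugA A) fun _ _ => lccStep.plugA A) hred, hv⟩

theorem exists_eq_plugA_of_mem_Qlcc {f : Exp S → Exp S} (hf : f ∈ Qlcc S) :
    ∃ A : ACtx S, f = plugA A := by
  rcases hf with ⟨r, -, -, rfl⟩ | ⟨T, c, i, rfl⟩ | ⟨T, c, rfl⟩
  · exact ⟨.appA .hole r, rfl⟩
  · exact ⟨.caseA T .hole _, rfl⟩
  · exact ⟨.caseA T .hole _, rfl⟩

/-- The closed part of `L_lcc` is convergence-admissible w.r.t.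
the set `Q_lcc`. -/
theorem lcc_convergence_admissible (S : Sig) :
    ∀ f ∈ Qlcc S, ∀ s : Exp S, lfree s → closed s →
      ∀ v, lccConvTo (f s) v ↔ ∃ v', lccConvTo s v' ∧ lccConvTo (f v') v := by
  intro f hf s _ _ v
  obtain ⟨A, rfl⟩ := exists_eq_plugA_of_mem_Qlcc hf
  exact lccConvTo_plugA_iff A s v

end Core
end

section
/- Classification of closed L_lcc-expressions: for every closed L_lcc-expression s, exactly one of the following holds: s ∼_lcc Ω, or s ∼_lcc λx.s' for some s', or s ∼_lcc (c s1 … sn) for some constructor c and expressions s1,…,sn. Moreover, for closed s, t with s ≤_lcc t, one of the following holds: s ∼_lcc Ω; or s ∼_lcc (c s1 … sn), t ∼_lcc (c t1 … tn) and si ≤_lcc ti for all i; or s ∼_lcc λx.s', t ∼_lcc λx.t' with s' ≤_lcc^o t'; or s ∼_lcc λx.s', t ∼_lcc (c t1 … tn) and s' ∈ cBot. -/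
variable (S : Sig)

/-! A closed expression that converges is contextually equivalent to its value, and one that
diverges is equivalent to `Ω`. Both facts come from one simulation argument: if `P` relates
closed non-values whose reductions match each other up to plugging related expressions into
contexts, then plugging `P`-related expressions into any context preserves convergence; this
applies to a single normal-order step and to the pair (diverging expression, `Ω`).

So the classification reduces to comparing values `v ≤ w`, where `t` has a value `w` because
the empty context is a probe. If `v = c a⃗`, the context `case_T [·] of (c … → True; _ → Ω)`
forces `w = c b⃗`, and the selectors `case_T [·] of (c x⃗ → xᵢ; _ → Ω)` give `aᵢ ≤ bᵢ`. If
`v = λx.u`, an application context `[·] r` compares bodies; when `w` is a constructor application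
it shows that `u` never converges, since applying a constructor application is stuck. -/

namespace Core

section

variable {S : Sig}

/-! ### Renaming and substitution -/

lemma liftN_comp (m : ℕ) (f g : ℕ → ℕ) :
    (fun k => liftN m f (liftN m g k)) = liftN m (fun k => f (g k)) := by
  funext k
  by_cases hk : k < m <;> simp [liftN, hk]

lemma rename_rename (e : Exp S) (f g : ℕ → ℕ) :
    rename f (rename g e) = rename (fun k => f (g k)) e := by
  induction e generalizing f g <;> simp only [rename, liftN_comp, *]

lemma upN_liftN (m : ℕ) (σ : ℕ → Exp S) (f : ℕ → ℕ) :
    (fun k => upN m σ (liftN m f k)) = upN m (fun k => σ (f k)) := by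
  funext k
  by_cases hk : k < m <;> simp [upN, liftN, hk]

lemma subst_rename (e : Exp S) (σ : ℕ → Exp S) (f : ℕ → ℕ) :
    subst σ (rename f e) = subst (fun k => σ (f k)) e := by
  induction e generalizing σ f <;> simp only [rename, subst, upN_liftN, *]

lemma liftN_upN (m : ℕ) (f : ℕ → ℕ) (σ : ℕ → Exp S) :
    (fun k => rename (liftN m f) (upN m σ k)) = upN m (fun k => rename f (σ k)) := by
  funext k
  by_cases hk : k < m
  · simp [upN, liftN, rename, hk]
  · simp only [upN, hk, if_false, rename_rename]
    congr 1
    funext x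
    simp [liftN]

lemma rename_subst (e : Exp S) (f : ℕ → ℕ) (σ : ℕ → Exp S) :
    rename f (subst σ e) = subst (fun k => rename f (σ k)) e := by
  induction e generalizing f σ <;> simp only [rename, subst, liftN_upN, *]

lemma upN_subst (m : ℕ) (ρ σ : ℕ → Exp S) :
    (fun k => subst (upN m ρ) (upN m σ k)) = upN m (fun k => subst ρ (σ k)) := by
  funext k
  by_cases hk : k < m
  · simp [upN, subst, hk]
  · simp only [upN, hk, if_false, subst_rename, rename_subst]
    congr 1
    funext x
    simp

lemma subst_subst (e : Exp S) (ρ σ : ℕ → Exp S) :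
    subst ρ (subst σ e) = subst (fun k => subst ρ (σ k)) e := by
  induction e generalizing ρ σ <;> simp only [subst, upN_subst, *]

lemma upN_var_comp (m : ℕ) (f : ℕ → ℕ) :
    upN m (fun k => (.var (f k) : Exp S)) = fun k => .var (liftN m f k) := by
  funext k
  by_cases hk : k < m <;> simp [upN, liftN, rename, hk]

lemma rename_eq_subst (e : Exp S) (f : ℕ → ℕ) :
    rename f e = subst (fun k => .var (f k)) e := by
  induction e generalizing f <;> simp only [rename, subst, upN_var_comp, *]

lemma upN_var (m : ℕ) : upN m (.var : ℕ → Exp S) = .var := by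
  funext k
  by_cases hk : k < m
  · simp [upN, hk]
  · simp only [upN, hk, if_false, rename]
    congr 1
    omega

lemma subst_var (e : Exp S) : subst .var e = e := by
  induction e <;> simp only [subst, upN_var, *]

lemma closedUnder_mono {d d' : ℕ} (h : d ≤ d') {e : Exp S} (he : closedUnder d e) :
    closedUnder d' e := by
  induction e generalizing d d' with
  | var k => exact lt_of_lt_of_le he h
  | app u v ihu ihv => exact ⟨ihu h he.1, ihv h he.2⟩
  | lam u ih => exact ih (by omega) he
  | constr T c args ih => exact fun i => ih i h (he i)
  | seqE u v ihu ihv => exact ⟨ihu h he.1, ihv h he.2⟩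
  | caseE T e alts ihe ih => exact ⟨ihe h he.1, fun c => ih c (by omega) (he.2 c)⟩
  | letrecE n b t ihb iht => exact ⟨fun i => ihb i (by omega) (he.1 i), iht (by omega) he.2⟩

lemma liftN_lt {d d' : ℕ} {f : ℕ → ℕ} (hf : ∀ k < d, f k < d') (n : ℕ) :
    ∀ k < d + n, liftN n f k < d' + n := by
  intro k hk
  unfold liftN
  split
  · omega
  · have := hf (k - n) (by omega)
    omega

lemma rename_closedUnder {d d' : ℕ} {f : ℕ → ℕ} (hf : ∀ k < d, f k < d') {e : Exp S}
    (he : closedUnder d e) : closedUnder d' (rename f e) := by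
  induction e generalizing d d' f with
  | var k => exact hf k he
  | app u v ihu ihv => exact ⟨ihu hf he.1, ihv hf he.2⟩
  | lam u ih => exact ih (liftN_lt hf 1) he
  | constr T c args ih => exact fun i => ih i hf (he i)
  | seqE u v ihu ihv => exact ⟨ihu hf he.1, ihv hf he.2⟩
  | caseE T e alts ihe ih => exact ⟨ihe hf he.1, fun c => ih c (liftN_lt hf _) (he.2 c)⟩
  | letrecE n b t ihb iht =>
    exact ⟨fun i => ihb i (liftN_lt hf _) (he.1 i), iht (liftN_lt hf _) he.2⟩

lemma closedUnder_upN {d : ℕ} {σ : ℕ → Exp S} (hσ : ∀ k, closedUnder d (σ k)) (n k : ℕ) :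
    closedUnder (d + n) (upN n σ k) := by
  unfold upN
  split
  · exact show k < d + n by omega
  · exact rename_closedUnder (fun j hj => by omega) (hσ _)

lemma closedUnder_subst {d : ℕ} {σ : ℕ → Exp S} (hσ : ∀ k, closedUnder d (σ k)) (e : Exp S) :
    closedUnder d (subst σ e) := by
  induction e generalizing d σ with
  | var k => exact hσ k
  | app u v ihu ihv => exact ⟨ihu hσ, ihv hσ⟩
  | lam u ih => exact ih (closedUnder_upN hσ 1)
  | constr T c args ih => exact fun i => ih i hσ
  | seqE u v ihu ihv => exact ⟨ihu hσ, ihv hσ⟩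
  | caseE T e alts ihe ih => exact ⟨ihe hσ, fun c => ih c (closedUnder_upN hσ _)⟩
  | letrecE n b t ihb iht =>
    exact ⟨fun i => ihb i (closedUnder_upN hσ _), iht (closedUnder_upN hσ _)⟩

lemma upN_congr {d : ℕ} {σ τ : ℕ → Exp S} (h : ∀ k < d, σ k = τ k) (n : ℕ) :
    ∀ k < d + n, upN n σ k = upN n τ k := by
  intro k hk
  unfold upN
  split
  · rfl
  · rw [h _ (by omega)]

lemma subst_congr {d : ℕ} {σ τ : ℕ → Exp S} (h : ∀ k < d, σ k = τ k) {e : Exp S}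
    (he : closedUnder d e) : subst σ e = subst τ e := by
  induction e generalizing d σ τ with
  | var k => exact h k he
  | app u v ihu ihv => simp only [subst, ihu h he.1, ihv h he.2]
  | lam u ih => simp only [subst, ih (upN_congr h 1) he]
  | constr T c args ih => simp only [subst, fun i => ih i h (he i)]
  | seqE u v ihu ihv => simp only [subst, ihu h he.1, ihv h he.2]
  | caseE T e alts ihe ih =>
    simp only [subst, ihe h he.1, fun c => ih c (upN_congr h _) (he.2 c)]
  | letrecE n b t ihb iht =>
    simp only [subst, fun i => ihb i (upN_congr h _) (he.1 i), iht (upN_congr h _) he.2]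

lemma subst_closed {e : Exp S} (he : closed e) (σ : ℕ → Exp S) : subst σ e = e := by
  rw [subst_congr (τ := .var) (fun k hk => absurd hk (Nat.not_lt_zero k)) he, subst_var]

lemma rename_closed {e : Exp S} (he : closed e) (f : ℕ → ℕ) : rename f e = e := by
  rw [rename_eq_subst, subst_closed he]

lemma lfree_rename {e : Exp S} (he : lfree e) (f : ℕ → ℕ) : lfree (rename f e) := by
  induction e generalizing f with
  | var k => trivial
  | app u v ihu ihv => exact ⟨ihu he.1 _, ihv he.2 _⟩
  | lam u ih => exact ih he _
  | constr T c args ih => exact fun i => ih i (he i) _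
  | seqE u v ihu ihv => exact ⟨ihu he.1 _, ihv he.2 _⟩
  | caseE T e alts ihe ih => exact ⟨ihe he.1 _, fun c => ih c (he.2 c) _⟩
  | letrecE n b t ihb iht => exact he.elim

lemma lfree_subst {e : Exp S} (he : lfree e) {σ : ℕ → Exp S} (hσ : ∀ k, lfree (σ k)) :
    lfree (subst σ e) := by
  have hup : ∀ {σ : ℕ → Exp S}, (∀ k, lfree (σ k)) → ∀ n k, lfree (upN n σ k) := by
    intro σ hσ n k
    unfold upN
    split
    exacts [trivial, lfree_rename (hσ _) _]
  induction e generalizing σ with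
  | var k => exact hσ k
  | app u v ihu ihv => exact ⟨ihu he.1 hσ, ihv he.2 hσ⟩
  | lam u ih => exact ih he (hup hσ 1)
  | constr T c args ih => exact fun i => ih i (he i) hσ
  | seqE u v ihu ihv => exact ⟨ihu he.1 hσ, ihv he.2 hσ⟩
  | caseE T e alts ihe ih => exact ⟨ihe he.1 hσ, fun c => ih c (he.2 c) (hup hσ _)⟩
  | letrecE n b t ihb iht => exact he.elim

lemma Omega_closed : closed (Omega : Exp S) := by
  simp [Omega, closed, closedUnder]

lemma Omega_lfree : lfree (Omega : Exp S) := by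
  simp [Omega, lfree]

lemma closedUnder_subst_of_lt {d m : ℕ} {σ : ℕ → Exp S} (hσ : ∀ k < m, closedUnder d (σ k))
    {e : Exp S} (he : closedUnder m e) : closedUnder d (subst σ e) := by
  rw [subst_congr (τ := fun k => if k < m then σ k else Omega) (fun k hk => (if_pos hk).symm) he]
  refine closedUnder_subst (fun k => ?_) e
  split
  · exact hσ k ‹_›
  · exact closedUnder_mono (Nat.zero_le d) Omega_closed

/-! ### Normal-order reduction -/

lemma LccBase.not_isValue {r r' : Exp S} (h : LccBase r r') : ¬ isValue r := by
  cases h <;> exact id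

lemma isValue_plugA {A : ACtx S} {e : Exp S} (h : isValue (plugA A e)) : A = .hole ∧ isValue e := by
  cases A <;> simp_all [plugA, isValue]

lemma LccBase.plugA_not_isValue {r r' : Exp S} (h : LccBase r r') (A : ACtx S) :
    ¬ isValue (plugA A r) :=
  fun hv => h.not_isValue (isValue_plugA hv).2

lemma not_lccStep_of_isValue {v y : Exp S} (hv : isValue v) : ¬ lccStep v y := by
  rintro ⟨A, r, r', hr, rfl, -⟩
  exact hr.plugA_not_isValue A hv

lemma lccStep_app_iff {e t y : Exp S} :
    lccStep (.app e t) y ↔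
      (∃ u, e = .lam u ∧ y = subst (consSub t) u) ∨ ∃ e', lccStep e e' ∧ y = .app e' t := by
  constructor
  · rintro ⟨A, r, r', hr, hx, rfl⟩
    cases A with
    | hole => subst hx; cases hr; exact .inl ⟨_, rfl, rfl⟩
    | appA A t' =>
      obtain ⟨rfl, rfl⟩ := Exp.app.inj hx
      exact .inr ⟨_, ⟨A, r, r', hr, rfl, rfl⟩, rfl⟩
    | seqA A t' => cases hx
    | caseA T A alts => cases hx
  · rintro (⟨u, rfl, rfl⟩ | ⟨e', ⟨A, r, r', hr, rfl, rfl⟩, rfl⟩)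
    exacts [⟨.hole, _, _, .nbeta, rfl, rfl⟩, ⟨.appA A t, r, r', hr, rfl, rfl⟩]

lemma lccStep_seqE_iff {e t y : Exp S} :
    lccStep (.seqE e t) y ↔ (isValue e ∧ y = t) ∨ ∃ e', lccStep e e' ∧ y = .seqE e' t := by
  constructor
  · rintro ⟨A, r, r', hr, hx, rfl⟩
    cases A with
    | hole => subst hx; cases hr with | nseq hv => exact .inl ⟨hv, rfl⟩
    | appA A t' => cases hx
    | seqA A t' =>
      obtain ⟨rfl, rfl⟩ := Exp.seqE.inj hx
      exact .inr ⟨_, ⟨A, r, r', hr, rfl, rfl⟩, rfl⟩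
    | caseA T A alts => cases hx
  · rintro (⟨hv, rfl⟩ | ⟨e', ⟨A, r, r', hr, rfl, rfl⟩, rfl⟩)
    exacts [⟨.hole, _, _, .nseq hv, rfl, rfl⟩, ⟨.seqA A t, r, r', hr, rfl, rfl⟩]

lemma lccStep_caseE_iff {T : S.TyName} {e y : Exp S} {alts : (c : S.CName T) → Exp S} :
    lccStep (.caseE T e alts) y ↔
      (∃ c args, e = .constr T c args ∧ y = subst (instSub args) (alts c)) ∨
        ∃ e', lccStep e e' ∧ y = .caseE T e' alts := by
  constructor
  · rintro ⟨A, r, r', hr, hx, rfl⟩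
    cases A with
    | hole => subst hx; cases hr; exact .inl ⟨_, _, rfl, rfl⟩
    | appA A t' => cases hx
    | seqA A t' => cases hx
    | caseA T' A alts' =>
      obtain ⟨rfl, rfl, h⟩ := Exp.caseE.inj hx
      cases h
      exact .inr ⟨_, ⟨A, r, r', hr, rfl, rfl⟩, rfl⟩
  · rintro (⟨c, args, rfl, rfl⟩ | ⟨e', ⟨A, r, r', hr, rfl, rfl⟩, rfl⟩)
    exacts [⟨.hole, _, _, .ncase, rfl, rfl⟩, ⟨.caseA T A alts, r, r', hr, rfl, rfl⟩]

lemma LccBase.eq_of_lccStep {r r' y : Exp S} (hr : LccBase r r') (h : lccStep r y) : y = r' := by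
  cases hr with
  | nbeta =>
    rcases lccStep_app_iff.1 h with ⟨u, hu, rfl⟩ | ⟨e', he, -⟩
    · cases hu; rfl
    · exact absurd he (not_lccStep_of_isValue trivial)
  | nseq hv =>
    rcases lccStep_seqE_iff.1 h with ⟨-, rfl⟩ | ⟨e', he, -⟩
    · rfl
    · exact absurd he (not_lccStep_of_isValue hv)
  | ncase =>
    rcases lccStep_caseE_iff.1 h with ⟨c, args, hc, rfl⟩ | ⟨e', he, -⟩
    · cases hc; rfl
    · exact absurd he (not_lccStep_of_isValue trivial)

lemma lccStep_det {x a b : Exp S} (ha : lccStep x a) (hb : lccStep x b) : a = b := by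
  obtain ⟨A, r, r', hr, rfl, rfl⟩ := ha
  induction A generalizing b with
  | hole => exact (hr.eq_of_lccStep hb).symm
  | appA A t ih =>
    rcases lccStep_app_iff.1 hb with ⟨u, hu, -⟩ | ⟨e', he, rfl⟩
    · exact absurd (hu ▸ trivial) (hr.plugA_not_isValue A)
    · exact congrArg (Exp.app · t) (ih he)
  | seqA A t ih =>
    rcases lccStep_seqE_iff.1 hb with ⟨hv, -⟩ | ⟨e', he, rfl⟩
    · exact absurd hv (hr.plugA_not_isValue A)
    · exact congrArg (Exp.seqE · t) (ih he)
  | caseA T A alts ih =>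
    rcases lccStep_caseE_iff.1 hb with ⟨c, args, hc, -⟩ | ⟨e', he, rfl⟩
    · exact absurd (hc ▸ trivial) (hr.plugA_not_isValue A)
    · exact congrArg (Exp.caseE T · alts) (ih he)

lemma eq_of_steps_of_isValue {v w : Exp S} (hv : isValue v)
    (h : Relation.ReflTransGen lccStep v w) : w = v := by
  rcases h.cases_head with rfl | ⟨_, hs, -⟩
  · rfl
  · exact absurd hs (not_lccStep_of_isValue hv)

lemma lccConv_of_steps {s t : Exp S} (h : Relation.ReflTransGen lccStep s t) (ht : lccConv t) :
    lccConv s :=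
  let ⟨v, htv, hv⟩ := ht
  ⟨v, h.trans htv, hv⟩

lemma LccBase.closed {r r' : Exp S} (h : LccBase r r') (hr : closed r) : closed r' := by
  cases h with
  | nbeta =>
    refine closedUnder_subst_of_lt (fun k hk => ?_) hr.1
    obtain rfl : k = 0 := by omega
    exact hr.2
  | nseq _ => exact hr.2
  | ncase =>
    refine closedUnder_subst_of_lt (fun k hk => ?_) (by simpa using hr.2 _)
    simpa [instSub, hk] using hr.1 _

lemma lccStep_closed {s t : Exp S} (h : lccStep s t) (hs : closed s) : closed t := by
  obtain ⟨A, r, r', hr, rfl, rfl⟩ := h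
  induction A with
  | hole => exact hr.closed hs
  | appA A t ih => exact ⟨ih hs.1, hs.2⟩
  | seqA A t ih => exact ⟨ih hs.1, hs.2⟩
  | caseA T A alts ih => exact ⟨ih hs.1, hs.2⟩

lemma lccSteps_closed {s t : Exp S} (h : Relation.ReflTransGen lccStep s t) (hs : closed s) :
    closed t := by
  induction h with
  | refl => exact hs
  | tail _ h ih => exact lccStep_closed h ih

lemma lccStep_Omega : lccStep (Omega : Exp S) Omega :=
  ⟨.hole, _, _, .nbeta, rfl, rfl⟩

lemma not_lccConv_Omega : ¬ lccConv (Omega : Exp S) := by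
  rintro ⟨v, hs, hv⟩
  suffices v = Omega by subst this; exact hv
  clear hv
  induction hs with
  | refl => rfl
  | tail _ h ih => subst ih; exact lccStep_det h lccStep_Omega

/-! ### Convergence under an evaluation frame -/

lemma lccSteps_frame {f : Exp S → Exp S} {top : Exp S → Exp S → Prop}
    (hstep : ∀ e y, lccStep (f e) y ↔ top e y ∨ ∃ e', lccStep e e' ∧ y = f e') {e e' : Exp S}
    (h : Relation.ReflTransGen lccStep e e') : Relation.ReflTransGen lccStep (f e) (f e') :=
  h.lift f fun a b hab => (hstep a _).2 (.inr ⟨b, hab, rfl⟩)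

lemma lccConv_frame_iff {f : Exp S → Exp S} {top : Exp S → Exp S → Prop}
    (hstep : ∀ e y, lccStep (f e) y ↔ top e y ∨ ∃ e', lccStep e e' ∧ y = f e')
    (hf : ∀ e, ¬ isValue (f e)) {e : Exp S} :
    lccConv (f e) ↔ ∃ e₀ y, Relation.ReflTransGen lccStep e e₀ ∧ top e₀ y ∧ lccConv y := by
  constructor
  · rintro ⟨v, hs, hv⟩
    generalize hx : f e = x at hs
    induction hs using Relation.ReflTransGen.head_induction_on generalizing e with
    | refl => exact absurd (hx ▸ hv) (hf e)
    | head hxy hyv ih =>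
      subst hx
      rcases (hstep e _).1 hxy with htop | ⟨e', he, rfl⟩
      · exact ⟨e, _, .refl, htop, _, hyv, hv⟩
      · obtain ⟨e₀, y, he₀, htop, hy⟩ := ih rfl
        exact ⟨e₀, y, .head he he₀, htop, hy⟩
  · rintro ⟨e₀, y, he₀, htop, hy⟩
    exact lccConv_of_steps ((lccSteps_frame hstep he₀).tail ((hstep e₀ y).2 (.inl htop))) hy

lemma lccConv_app_iff {e t : Exp S} :
    lccConv (.app e t) ↔
      ∃ u, Relation.ReflTransGen lccStep e (.lam u) ∧ lccConv (subst (consSub t) u) := by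
  rw [lccConv_frame_iff (fun _ _ => lccStep_app_iff) (fun _ => id)]
  constructor
  · rintro ⟨_, _, he, ⟨u, rfl, rfl⟩, hc⟩
    exact ⟨u, he, hc⟩
  · rintro ⟨u, he, hc⟩
    exact ⟨_, _, he, ⟨u, rfl, rfl⟩, hc⟩

lemma lccConv_caseE_iff {T : S.TyName} {e : Exp S} {alts : (c : S.CName T) → Exp S} :
    lccConv (.caseE T e alts) ↔
      ∃ c args, Relation.ReflTransGen lccStep e (.constr T c args) ∧
        lccConv (subst (instSub args) (alts c)) := by
  rw [lccConv_frame_iff (fun _ _ => lccStep_caseE_iff) (fun _ => id)]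
  constructor
  · rintro ⟨_, _, he, ⟨c, args, rfl, rfl⟩, hc⟩
    exact ⟨c, args, he, hc⟩
  · rintro ⟨c, args, he, hc⟩
    exact ⟨_, _, he, ⟨c, args, rfl, rfl⟩, hc⟩

/-! ### Bisimulation up to context -/

inductive CtxClosure (P : Exp S → Exp S → Prop) : Exp S → Exp S → Prop where
  | base {x y} : P x y → CtxClosure P x y
  | var (k) : CtxClosure P (.var k) (.var k)
  | app {u u' v v'} : CtxClosure P u u' → CtxClosure P v v' → CtxClosure P (.app u v) (.app u' v')
  | lam {u u'} : CtxClosure P u u' → CtxClosure P (.lam u) (.lam u')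
  | constr {T c args args'} : (∀ i, CtxClosure P (args i) (args' i)) →
      CtxClosure P (.constr T c args) (.constr T c args')
  | seqE {u u' v v'} : CtxClosure P u u' → CtxClosure P v v' →
      CtxClosure P (.seqE u v) (.seqE u' v')
  | caseE {T e e' alts alts'} : CtxClosure P e e' → (∀ c, CtxClosure P (alts c) (alts' c)) →
      CtxClosure P (.caseE T e alts) (.caseE T e' alts')
  | letrecE {n b b' t t'} : (∀ i, CtxClosure P (b i) (b' i)) → CtxClosure P t t' →
      CtxClosure P (.letrecE n b t) (.letrecE n b' t')

variable {P : Exp S → Exp S → Prop}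

lemma ctxClosure_refl (e : Exp S) : CtxClosure P e e := by
  induction e with
  | var k => exact .var k
  | app u v ihu ihv => exact .app ihu ihv
  | lam u ih => exact .lam ih
  | constr T c args ih => exact .constr ih
  | seqE u v ihu ihv => exact .seqE ihu ihv
  | caseE T e alts ihe ih => exact .caseE ihe ih
  | letrecE n b t ihb iht => exact .letrecE ihb iht

lemma ctxClosure_plugC {s t : Exp S} (h : P s t) (C : Ctx S) :
    CtxClosure P (plugC C s) (plugC C t) := by
  have hupdate : ∀ {n} (f : Fin n → Exp S) (i : Fin n) {a b}, CtxClosure P a b →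
      ∀ j, CtxClosure P (Function.update f i a j) (Function.update f i b j) := by
    intro n f i a b hab j
    by_cases hj : j = i
    · subst hj; simpa using hab
    · simpa [hj] using ctxClosure_refl _
  induction C with
  | hole => exact .base h
  | appL C w ih => exact .app ih (ctxClosure_refl w)
  | appR w C ih => exact .app (ctxClosure_refl w) ih
  | lamC C ih => exact .lam ih
  | seqL C w ih => exact .seqE ih (ctxClosure_refl w)
  | seqR w C ih => exact .seqE (ctxClosure_refl w) ih
  | constrC T c i args C ih => exact .constr (hupdate args i ih)
  | caseScrut T C alts ih => exact .caseE ih fun _ => ctxClosure_refl _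
  | caseAlt T c₀ scrut alts C ih =>
    refine .caseE (ctxClosure_refl _) fun c => ?_
    unfold updAlt
    split
    exacts [ih, ctxClosure_refl _]
  | letrecB n i b C t ih => exact .letrecE (hupdate b i ih) (ctxClosure_refl t)
  | letrecT n b C ih => exact .letrecE (fun _ => ctxClosure_refl _) ih

lemma ctxClosure_rename (hP : ∀ x y, P x y → closed x ∧ closed y) {a b : Exp S}
    (h : CtxClosure P a b) (f : ℕ → ℕ) : CtxClosure P (rename f a) (rename f b) := by
  induction h generalizing f with
  | base hp =>
    rw [rename_closed (hP _ _ hp).1, rename_closed (hP _ _ hp).2]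
    exact .base hp
  | var k => exact .var _
  | app _ _ ihu ihv => exact .app (ihu f) (ihv f)
  | lam _ ih => exact .lam (ih _)
  | constr _ ih => exact .constr fun i => ih i _
  | seqE _ _ ihu ihv => exact .seqE (ihu f) (ihv f)
  | caseE _ _ ihe ih => exact .caseE (ihe _) fun c => ih c _
  | letrecE _ _ ihb iht => exact .letrecE (fun i => ihb i _) (iht _)

lemma ctxClosure_subst (hP : ∀ x y, P x y → closed x ∧ closed y) {a b : Exp S}
    (h : CtxClosure P a b) {σ τ : ℕ → Exp S} (hστ : ∀ k, CtxClosure P (σ k) (τ k)) :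
    CtxClosure P (subst σ a) (subst τ b) := by
  have hup : ∀ {σ τ : ℕ → Exp S}, (∀ k, CtxClosure P (σ k) (τ k)) →
      ∀ n k, CtxClosure P (upN n σ k) (upN n τ k) := by
    intro σ τ hστ n k
    unfold upN
    split
    exacts [.var _, ctxClosure_rename hP (hστ _) _]
  induction h generalizing σ τ with
  | base hp =>
    rw [subst_closed (hP _ _ hp).1, subst_closed (hP _ _ hp).2]
    exact .base hp
  | var k => exact hστ k
  | app _ _ ihu ihv => exact .app (ihu hστ) (ihv hστ)
  | lam _ ih => exact .lam (ih (hup hστ 1))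
  | constr _ ih => exact .constr fun i => ih i hστ
  | seqE _ _ ihu ihv => exact .seqE (ihu hστ) (ihv hστ)
  | caseE _ _ ihe ih => exact .caseE (ihe hστ) fun c => ih c (hup hστ _)
  | letrecE _ _ ihb iht => exact .letrecE (fun i => ihb i (hup hστ _)) (iht (hup hστ _))

lemma ctxClosure_consSub {t t' : Exp S} (h : CtxClosure P t t') (k : ℕ) :
    CtxClosure P (consSub t k) (consSub t' k) := by
  cases k
  exacts [h, .var _]

lemma ctxClosure_instSub {m : ℕ} {args args' : Fin m → Exp S}
    (h : ∀ i, CtxClosure P (args i) (args' i)) (k : ℕ) :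
    CtxClosure P (instSub args k) (instSub args' k) := by
  unfold instSub
  split
  exacts [h _, .var _]

structure IsBisimUpToCtx (P : Exp S → Exp S → Prop) : Prop where
  isClosed : ∀ x y, P x y → closed x ∧ closed y
  not_isValue : ∀ x y, P x y → ¬ isValue x
  step_left : ∀ x y x', P x y → lccStep x x' →
    ∃ y', Relation.ReflTransGen lccStep y y' ∧ CtxClosure P x' y'
  step_right : ∀ x y y', P x y → lccStep y y' →
    ∃ x', Relation.ReflTransGen lccStep x x' ∧ CtxClosure P x' y'
  value_right : ∀ x y, P x y → isValue y → Relation.ReflTransGen lccStep x y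

namespace IsBisimUpToCtx

variable (hP : IsBisimUpToCtx P)
include hP

lemma isValue_right {u u' : Exp S} (h : CtxClosure P u u') (hu : isValue u) : isValue u' := by
  cases h with
  | base hp => exact absurd hu (hP.not_isValue _ _ hp)
  | lam _ | constr _ => trivial
  | var _ | app _ _ | seqE _ _ | caseE _ _ | letrecE _ _ => exact hu.elim

lemma exists_value_left {u v' : Exp S} (h : CtxClosure P u v') (hv' : isValue v') :
    ∃ v, Relation.ReflTransGen lccStep u v ∧ isValue v := by
  cases h with
  | base hp => exact ⟨v', hP.value_right _ _ hp hv', hv'⟩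
  | lam _ | constr _ => exact ⟨_, .refl, trivial⟩
  | var _ | app _ _ | seqE _ _ | caseE _ _ | letrecE _ _ => exact hv'.elim

lemma exists_lam_left {u u₀' : Exp S} (h : CtxClosure P u (.lam u₀')) :
    ∃ u₀, Relation.ReflTransGen lccStep u (.lam u₀) ∧ CtxClosure P u₀ u₀' := by
  cases h with
  | base hp => exact ⟨u₀', hP.value_right _ _ hp trivial, ctxClosure_refl _⟩
  | lam h => exact ⟨_, .refl, h⟩

lemma exists_constr_left {u : Exp S} {T c} {args' : Fin (S.arity T c) → Exp S}
    (h : CtxClosure P u (.constr T c args')) :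
    ∃ args, Relation.ReflTransGen lccStep u (.constr T c args) ∧
      ∀ i, CtxClosure P (args i) (args' i) := by
  cases h with
  | base hp => exact ⟨args', hP.value_right _ _ hp trivial, fun _ => ctxClosure_refl _⟩
  | constr h => exact ⟨_, .refl, h⟩

lemma exists_of_base_left {r r' b : Exp S} (hr : LccBase r r') (h : CtxClosure P r b) :
    ∃ b', Relation.ReflTransGen lccStep b b' ∧ CtxClosure P r' b' := by
  cases h with
  | base hp => exact hP.step_left _ _ _ hp ⟨.hole, r, r', hr, rfl, rfl⟩
  | app hu hv =>
    cases hr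
    cases hu with
    | base hp => exact absurd trivial (hP.not_isValue _ _ hp)
    | lam hu =>
      exact ⟨_, .single ⟨.hole, _, _, .nbeta, rfl, rfl⟩,
        ctxClosure_subst hP.isClosed hu (ctxClosure_consSub hv)⟩
  | seqE hu hv =>
    cases hr with
    | nseq hv₀ => exact ⟨_, .single ⟨.hole, _, _, .nseq (hP.isValue_right hu hv₀), rfl, rfl⟩, hv⟩
  | caseE he halts =>
    cases hr
    cases he with
    | base hp => exact absurd trivial (hP.not_isValue _ _ hp)
    | constr hargs =>
      exact ⟨_, .single ⟨.hole, _, _, .ncase, rfl, rfl⟩,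
        ctxClosure_subst hP.isClosed (halts _) (ctxClosure_instSub hargs)⟩
  | var _ | lam _ | constr _ | letrecE _ _ => cases hr

lemma exists_of_step_left {a a' b : Exp S} (h : lccStep a a') (hab : CtxClosure P a b) :
    ∃ b', Relation.ReflTransGen lccStep b b' ∧ CtxClosure P a' b' := by
  obtain ⟨A, r, r', hr, rfl, rfl⟩ := h
  induction A generalizing b with
  | hole => exact hP.exists_of_base_left hr hab
  | appA A t ih =>
    cases hab with
    | base hp => exact hP.step_left _ _ _ hp ⟨.appA A t, r, r', hr, rfl, rfl⟩
    | app hu hv =>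
      obtain ⟨b', hb', h'⟩ := ih hu
      exact ⟨_, lccSteps_frame (fun _ _ => lccStep_app_iff) hb', .app h' hv⟩
  | seqA A t ih =>
    cases hab with
    | base hp => exact hP.step_left _ _ _ hp ⟨.seqA A t, r, r', hr, rfl, rfl⟩
    | seqE hu hv =>
      obtain ⟨b', hb', h'⟩ := ih hu
      exact ⟨_, lccSteps_frame (fun _ _ => lccStep_seqE_iff) hb', .seqE h' hv⟩
  | caseA T A alts ih =>
    cases hab with
    | base hp => exact hP.step_left _ _ _ hp ⟨.caseA T A alts, r, r', hr, rfl, rfl⟩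
    | caseE he halts =>
      obtain ⟨b', hb', h'⟩ := ih he
      exact ⟨_, lccSteps_frame (fun _ _ => lccStep_caseE_iff) hb', .caseE h' halts⟩

lemma exists_of_base_right {r r' a : Exp S} (hr : LccBase r r') (h : CtxClosure P a r) :
    ∃ a', Relation.ReflTransGen lccStep a a' ∧ CtxClosure P a' r' := by
  cases hr with
  | nbeta =>
    cases h with
    | base hp => exact hP.step_right _ _ _ hp ⟨.hole, _, _, .nbeta, rfl, rfl⟩
    | app hu hv =>
      obtain ⟨u₀, hu₀, h₀⟩ := hP.exists_lam_left hu
      exact ⟨_, (lccSteps_frame (fun _ _ => lccStep_app_iff) hu₀).tail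
        ⟨.hole, _, _, .nbeta, rfl, rfl⟩, ctxClosure_subst hP.isClosed h₀ (ctxClosure_consSub hv)⟩
  | nseq hv' =>
    cases h with
    | base hp => exact hP.step_right _ _ _ hp ⟨.hole, _, _, .nseq hv', rfl, rfl⟩
    | seqE hu hv =>
      obtain ⟨x, hx, hxv⟩ := hP.exists_value_left hu hv'
      exact ⟨_, (lccSteps_frame (fun _ _ => lccStep_seqE_iff) hx).tail
        ⟨.hole, _, _, .nseq hxv, rfl, rfl⟩, hv⟩
  | ncase =>
    cases h with
    | base hp => exact hP.step_right _ _ _ hp ⟨.hole, _, _, .ncase, rfl, rfl⟩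
    | caseE he halts =>
      obtain ⟨args, hargs, h'⟩ := hP.exists_constr_left he
      exact ⟨_, (lccSteps_frame (fun _ _ => lccStep_caseE_iff) hargs).tail
        ⟨.hole, _, _, .ncase, rfl, rfl⟩, ctxClosure_subst hP.isClosed (halts _) (ctxClosure_instSub h')⟩

lemma exists_of_step_right {b b' a : Exp S} (h : lccStep b b') (hab : CtxClosure P a b) :
    ∃ a', Relation.ReflTransGen lccStep a a' ∧ CtxClosure P a' b' := by
  obtain ⟨B, r, r', hr, rfl, rfl⟩ := h
  induction B generalizing a with
  | hole => exact hP.exists_of_base_right hr hab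
  | appA B t ih =>
    cases hab with
    | base hp => exact hP.step_right _ _ _ hp ⟨.appA B t, r, r', hr, rfl, rfl⟩
    | app hu hv =>
      obtain ⟨a', ha', h'⟩ := ih hu
      exact ⟨_, lccSteps_frame (fun _ _ => lccStep_app_iff) ha', .app h' hv⟩
  | seqA B t ih =>
    cases hab with
    | base hp => exact hP.step_right _ _ _ hp ⟨.seqA B t, r, r', hr, rfl, rfl⟩
    | seqE hu hv =>
      obtain ⟨a', ha', h'⟩ := ih hu
      exact ⟨_, lccSteps_frame (fun _ _ => lccStep_seqE_iff) ha', .seqE h' hv⟩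
  | caseA T B alts ih =>
    cases hab with
    | base hp => exact hP.step_right _ _ _ hp ⟨.caseA T B alts, r, r', hr, rfl, rfl⟩
    | caseE he halts =>
      obtain ⟨a', ha', h'⟩ := ih he
      exact ⟨_, lccSteps_frame (fun _ _ => lccStep_caseE_iff) ha', .caseE h' halts⟩

lemma lccConv_right {a b : Exp S} (hab : CtxClosure P a b) (ha : lccConv a) : lccConv b := by
  obtain ⟨v, hs, hv⟩ := ha
  induction hs using Relation.ReflTransGen.head_induction_on generalizing b with
  | refl => exact ⟨b, .refl, hP.isValue_right hab hv⟩
  | head h _ ih =>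
    obtain ⟨b', hb', h'⟩ := hP.exists_of_step_left h hab
    exact lccConv_of_steps hb' (ih h')

lemma lccConv_left {a b : Exp S} (hab : CtxClosure P a b) (hb : lccConv b) : lccConv a := by
  obtain ⟨v, hs, hv⟩ := hb
  induction hs using Relation.ReflTransGen.head_induction_on generalizing a with
  | refl => exact hP.exists_value_left hab hv
  | head h _ ih =>
    obtain ⟨a', ha', h'⟩ := hP.exists_of_step_right h hab
    exact lccConv_of_steps ha' (ih h')

lemma eqLcc {s t : Exp S} (h : P s t) : eqLcc s t :=
  ⟨fun C _ hc => hP.lccConv_right (ctxClosure_plugC h C) hc,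
    fun C _ hc => hP.lccConv_left (ctxClosure_plugC h C) hc⟩

end IsBisimUpToCtx

lemma isBisimUpToCtx_lccStep {s t : Exp S} (h : lccStep s t) (hs : closed s) :
    IsBisimUpToCtx (fun x y => x = s ∧ y = t) where
  isClosed := by
    rintro _ _ ⟨rfl, rfl⟩
    exact ⟨hs, lccStep_closed h hs⟩
  not_isValue := by
    rintro _ _ ⟨rfl, rfl⟩ hv
    exact not_lccStep_of_isValue hv h
  step_left := by
    rintro _ _ x' ⟨rfl, rfl⟩ hx'
    exact ⟨_, .refl, lccStep_det h hx' ▸ ctxClosure_refl _⟩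
  step_right := by
    rintro _ _ y' ⟨rfl, rfl⟩ hy'
    exact ⟨y', .head h (.single hy'), ctxClosure_refl _⟩
  value_right := by
    rintro _ _ ⟨rfl, rfl⟩ -
    exact .single h

lemma isBisimUpToCtx_Omega :
    IsBisimUpToCtx (fun x y : Exp S => closed x ∧ ¬ lccConv x ∧ y = Omega) where
  isClosed := by
    rintro x _ ⟨hx, -, rfl⟩
    exact ⟨hx, Omega_closed⟩
  not_isValue := by
    rintro x _ ⟨-, hx, -⟩ hv
    exact hx ⟨x, .refl, hv⟩
  step_left := by
    rintro x _ x' ⟨hx, hd, rfl⟩ h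
    exact ⟨Omega, .refl,
      .base ⟨lccStep_closed h hx, fun hc => hd (lccConv_of_steps (.single h) hc), rfl⟩⟩
  step_right := by
    rintro x _ y' ⟨hx, hd, rfl⟩ h
    rw [lccStep_det h lccStep_Omega]
    exact ⟨x, .refl, .base ⟨hx, hd, rfl⟩⟩
  value_right := by
    rintro _ _ ⟨-, -, rfl⟩ hv
    exact hv.elim

/-! ### Contextual preorder -/

lemma leLcc_refl (s : Exp S) : leLcc s s := fun _ _ h => h

lemma leLcc.trans {s t u : Exp S} (h₁ : leLcc s t) (h₂ : leLcc t u) : leLcc s u :=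
  fun C hC hc => h₂ C hC (h₁ C hC hc)

lemma eqLcc.trans {s t u : Exp S} (h₁ : eqLcc s t) (h₂ : eqLcc t u) : eqLcc s u :=
  ⟨h₁.1.trans h₂.1, h₂.2.trans h₁.2⟩

lemma leLcc.lccConv {s t : Exp S} (h : leLcc s t) (hs : lccConv s) : lccConv t :=
  h .hole trivial hs

lemma eqLcc_of_lccStep {s t : Exp S} (h : lccStep s t) (hs : closed s) : eqLcc s t :=
  (isBisimUpToCtx_lccStep h hs).eqLcc ⟨rfl, rfl⟩

lemma eqLcc_of_steps {s t : Exp S} (h : Relation.ReflTransGen lccStep s t) (hs : closed s) :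
    eqLcc s t := by
  induction h with
  | refl => exact ⟨leLcc_refl s, leLcc_refl s⟩
  | tail hst h ih => exact ih.trans (eqLcc_of_lccStep h (lccSteps_closed hst hs))

lemma eqLcc_Omega_of_not_lccConv {s : Exp S} (hs : closed s) (h : ¬ lccConv s) :
    eqLcc s Omega :=
  isBisimUpToCtx_Omega.eqLcc ⟨hs, h, rfl⟩

lemma exists_isValue_eqLcc {s : Exp S} (hs : closed s) (h : lccConv s) :
    ∃ v, isValue v ∧ closed v ∧ eqLcc s v :=
  let ⟨v, hsv, hv⟩ := h
  ⟨v, hv, lccSteps_closed hsv hs, eqLcc_of_steps hsv hs⟩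

def Ctx.comp : Ctx S → Ctx S → Ctx S
  | .hole, D => D
  | .appL C t, D => .appL (C.comp D) t
  | .appR t C, D => .appR t (C.comp D)
  | .lamC C, D => .lamC (C.comp D)
  | .seqL C t, D => .seqL (C.comp D) t
  | .seqR t C, D => .seqR t (C.comp D)
  | .constrC T c i args C, D => .constrC T c i args (C.comp D)
  | .caseScrut T C alts, D => .caseScrut T (C.comp D) alts
  | .caseAlt T c₀ scrut alts C, D => .caseAlt T c₀ scrut alts (C.comp D)
  | .letrecB n i b C t, D => .letrecB n i b (C.comp D) t
  | .letrecT n b C, D => .letrecT n b (C.comp D)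

lemma plugC_comp (C D : Ctx S) (e : Exp S) : plugC (C.comp D) e = plugC C (plugC D e) := by
  induction C <;> simp [Ctx.comp, plugC, *]

lemma lfreeCtx_comp {C D : Ctx S} (hC : lfreeCtx C) (hD : lfreeCtx D) : lfreeCtx (C.comp D) := by
  induction C <;> simp_all [Ctx.comp, lfreeCtx]

lemma leLcc_plugC {D : Ctx S} (hD : lfreeCtx D) {s t : Exp S} (h : leLcc s t) :
    leLcc (plugC D s) (plugC D t) := by
  intro C hC hc
  rw [← plugC_comp] at hc ⊢
  exact h _ (lfreeCtx_comp hC hD) hc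

lemma leLcc.app {s t : Exp S} (h : leLcc s t) {r : Exp S} (hr : lfree r) :
    leLcc (.app s r) (.app t r) :=
  leLcc_plugC (D := .appL .hole r) ⟨trivial, hr⟩ h

lemma leLcc.caseE {s t : Exp S} (h : leLcc s t) {T : S.TyName} {alts : (c : S.CName T) → Exp S}
    (halts : ∀ c, lfree (alts c)) : leLcc (.caseE T s alts) (.caseE T t alts) :=
  leLcc_plugC (D := .caseScrut T .hole alts) ⟨trivial, halts⟩ h

/-! ### Comparing values -/

lemma not_leLcc_Omega {v : Exp S} (hv : isValue v) : ¬ leLcc v Omega :=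
  fun h => not_lccConv_Omega (h.lccConv ⟨v, .refl, hv⟩)

lemma exists_constr_of_leLcc_constr {T : S.TyName} {c : S.CName T}
    {args : Fin (S.arity T c) → Exp S} {w : Exp S} (h : leLcc (.constr T c args) w)
    (hw : isValue w) : ∃ targs, w = .constr T c targs := by
  have hprobe : lccConv (caseTrueCtx T c w) := by
    refine (h.caseE fun c' => ?_).lccConv (lccConv_caseE_iff.2 ⟨c, args, .refl, ?_⟩)
    · split
      exacts [by simp [trueE, lfree], Omega_lfree]
    · rw [if_pos rfl]
      exact ⟨_, .refl, trivial⟩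
  obtain ⟨c', targs, hw', hc'⟩ := lccConv_caseE_iff.1 hprobe
  obtain rfl := eq_of_steps_of_isValue hw hw'
  by_cases hcc : c' = c
  · subst hcc
    exact ⟨targs, rfl⟩
  · simp only [hcc, if_false, subst_closed Omega_closed] at hc'
    exact absurd hc' not_lccConv_Omega

lemma eqLcc_caseSelCtx {T : S.TyName} {c : S.CName T} {args : Fin (S.arity T c) → Exp S}
    (hcl : closed (Exp.constr T c args)) (i : Fin (S.arity T c)) :
    eqLcc (caseSelCtx T c i (.constr T c args)) (args i) := by
  refine eqLcc_of_lccStep ⟨.hole, _, _, .ncase, rfl, by simp [plugA, instSub, subst]⟩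
    ⟨hcl, fun c' => ?_⟩
  dsimp only
  split
  · subst c'
    exact show (i : ℕ) < 0 + S.arity T c by omega
  · exact closedUnder_mono (Nat.zero_le _) Omega_closed

lemma leLcc_arg_of_leLcc_constr {T : S.TyName} {c : S.CName T}
    {args targs : Fin (S.arity T c) → Exp S} (h : leLcc (.constr T c args) (.constr T c targs))
    (hs : closed (Exp.constr T c args)) (ht : closed (Exp.constr T c targs))
    (i : Fin (S.arity T c)) : leLcc (args i) (targs i) := by
  have hsel : leLcc (caseSelCtx T c i (.constr T c args)) (caseSelCtx T c i (.constr T c targs)) :=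
    h.caseE fun c' => by split; exacts [trivial, Omega_lfree]
  exact (eqLcc_caseSelCtx hs i).2.trans (hsel.trans (eqLcc_caseSelCtx ht i).1)

def closeOmega (e : Exp S) : Exp S := subst (fun _ => Omega) e

lemma lfree_closeOmega {e : Exp S} (he : lfree e) : lfree (closeOmega e) :=
  lfree_subst he fun _ => Omega_lfree

lemma eqLcc_app_lam_closeOmega {u : Exp S} (hu : closedUnder 1 u) {σ : ℕ → Exp S}
    (hc : closed (subst σ u)) : eqLcc (.app (.lam u) (closeOmega (σ 0))) (subst σ u) := by
  -- `σ 0` is open when `u` does not use its bound variable; closing it changes nothing.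
  have hbeta : subst (consSub (closeOmega (σ 0))) u = subst σ u :=
    calc subst (consSub (closeOmega (σ 0))) u
        = subst (fun k => subst (fun _ => Omega) (σ k)) u :=
          subst_congr (fun k hk => by
            obtain rfl : k = 0 := by omega
            rfl) hu
      _ = subst σ u := by rw [← subst_subst, subst_closed hc]
  exact eqLcc_of_lccStep ⟨.hole, _, _, .nbeta, rfl, hbeta.symm⟩
    ⟨hu, closedUnder_subst (fun _ => Omega_closed) _⟩

lemma openL_leLcc_of_leLcc_lam {u u' : Exp S} (h : leLcc (.lam u) (.lam u'))
    (hu : closedUnder 1 u) (hu' : closedUnder 1 u') : openL leLcc u u' := by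
  intro σ hσ hc hc'
  exact (eqLcc_app_lam_closeOmega hu hc).2.trans
    ((h.app (lfree_closeOmega (hσ 0))).trans (eqLcc_app_lam_closeOmega hu' hc').1)

lemma cBot_of_leLcc_lam_constr {u : Exp S} {T : S.TyName} {c : S.CName T}
    {targs : Fin (S.arity T c) → Exp S} (h : leLcc (.lam u) (.constr T c targs))
    (hu : closedUnder 1 u) : cBot u := by
  intro σ hσ hc hconv
  have happ := (h.app (lfree_closeOmega (hσ 0))).lccConv ((eqLcc_app_lam_closeOmega hu hc).2.lccConv hconv)
  obtain ⟨u', hu', -⟩ := lccConv_app_iff.1 happ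
  cases eq_of_steps_of_isValue (by trivial) hu'

lemma exists_eq_lam_or_constr_of_isValue {v : Exp S} (hv : isValue v) :
    (∃ u, v = .lam u) ∨ ∃ T c args, v = .constr T c args := by
  cases v with
  | lam u => exact .inl ⟨u, rfl⟩
  | constr T c args => exact .inr ⟨T, c, args, rfl⟩
  | _ => exact hv.elim

end

/-- Classification of closed `L_lcc`-expressions: every closed
`L_lcc`-expression is contextually equivalent to exactly one of `Ω`, an abstraction, or
a constructor application; and for closed `s ≤_lcc t` one of the four listed cases holds. -/
theorem lcc_classification (S : Sig) :
    (∀ s : Exp S, lfree s → closed s →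
      ((eqLcc s Omega ∨ (∃ s', eqLcc s (.lam s')) ∨
          (∃ T c args, eqLcc s (.constr T c args))) ∧
       ¬(eqLcc s Omega ∧ (∃ s', eqLcc s (.lam s'))) ∧
       ¬(eqLcc s Omega ∧ (∃ T c args, eqLcc s (.constr T c args))) ∧
       ¬((∃ s', eqLcc s (.lam s')) ∧ (∃ T c args, eqLcc s (.constr T c args))))) ∧
    (∀ s t : Exp S, lfree s → lfree t → closed s → closed t → leLcc s t →
      (eqLcc s Omega ∨
       (∃ T c args targs, eqLcc s (.constr T c args) ∧ eqLcc t (.constr T c targs) ∧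
          ∀ i, leLcc (args i) (targs i)) ∨
       (∃ s' t', eqLcc s (.lam s') ∧ eqLcc t (.lam t') ∧ openL leLcc s' t') ∨
       (∃ s' T c targs, eqLcc s (.lam s') ∧ eqLcc t (.constr T c targs) ∧ cBot s'))) := by
  refine ⟨fun s _ hs => ⟨?_, ?_, ?_, ?_⟩, fun s t _ _ hs ht hst => ?_⟩
  · by_cases hconv : lccConv s
    · obtain ⟨v, hv, -, hsv⟩ := exists_isValue_eqLcc hs hconv
      rcases exists_eq_lam_or_constr_of_isValue hv with ⟨u, rfl⟩ | ⟨T, c, args, rfl⟩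
      exacts [.inr (.inl ⟨u, hsv⟩), .inr (.inr ⟨T, c, args, hsv⟩)]
    · exact .inl (eqLcc_Omega_of_not_lccConv hs hconv)
  · rintro ⟨hΩ, _, hv⟩
    exact not_leLcc_Omega (by trivial) (hv.2.trans hΩ.1)
  · rintro ⟨hΩ, _, _, _, hv⟩
    exact not_leLcc_Omega (by trivial) (hv.2.trans hΩ.1)
  · rintro ⟨⟨_, hlam⟩, _, _, _, hconstr⟩
    obtain ⟨_, h⟩ := exists_constr_of_leLcc_constr (hconstr.2.trans hlam.1) (by trivial)
    cases h
  by_cases hconv : lccConv s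
  · obtain ⟨v, hv, hvc, hsv⟩ := exists_isValue_eqLcc hs hconv
    obtain ⟨w, hw, hwc, htw⟩ := exists_isValue_eqLcc ht (hst.lccConv hconv)
    have hvw : leLcc v w := hsv.2.trans (hst.trans htw.1)
    rcases exists_eq_lam_or_constr_of_isValue hv with ⟨u, rfl⟩ | ⟨T, c, args, rfl⟩
    · rcases exists_eq_lam_or_constr_of_isValue hw with ⟨u', rfl⟩ | ⟨T', c', targs, rfl⟩
      · exact .inr (.inr (.inl ⟨u, u', hsv, htw, openL_leLcc_of_leLcc_lam hvw hvc hwc⟩))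
      · exact .inr (.inr (.inr ⟨u, T', c', targs, hsv, htw, cBot_of_leLcc_lam_constr hvw hvc⟩))
    · obtain ⟨targs, rfl⟩ := exists_constr_of_leLcc_constr hvw hw
      exact .inr (.inl ⟨T, c, args, targs, hsv, htw, leLcc_arg_of_leLcc_constr hvw hvc hwc⟩)
  · exact .inl (eqLcc_Omega_of_not_lccConv hs hconv)

end Core
end
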